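/- arXiv:1904.11283 — 6 statements merged into one kernel-verified Lean document; each statement's English description precedes it below -/
import Mathlib

section
/- Let n ≥ 3 be an integer, m ≠ 0 and λ ≤ 0 real numbers, and α ∈ ℝⁿ with Σᵢ αᵢ² = 1. Let φ, u : ℝ → ℝ be smooth with φ nowhere vanishing and u everywhere positive, and define Φ, U : ℝⁿ → ℝ by Φ(x) = φ(Σᵢ αᵢxᵢ) and U(x) = u(Σᵢ αᵢxᵢ). Then the following PDE system holds on ℝⁿ — for all i ≠ j: (m/U)(∂ᵢ∂ⱼU + (∂ⱼΦ/Φ)∂ᵢU + (∂ᵢΦ/Φ)∂ⱼU) = (n−2)(∂ᵢ∂ⱼΦ)/Φ, and for all i: (m/U)(∂ᵢ∂ᵢU + 2(∂ᵢΦ/Φ)∂ᵢU − Σₖ(∂ₖΦ/Φ)∂ₖU) = (n−2)(∂ᵢ∂ᵢΦ)/Φ + (ΔΦ)/Φ − (n−1)|∇Φ|²/Φ² − λ/Φ² — if and only if φ and u satisfy on ℝ the ODE system: (E1) (n−2)φ''/φ − (m/u)(u'' + 2(φ'/φ)u') = 0 and (E2) φ''/φ − (n−1)(φ')²/φ² +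 m(φ'/φ)(u'/u) = λ/φ². -/
/-- Partial derivative of a real-valued function on Euclidean space in the
`i`-th coordinate direction. -/
noncomputable def pd {n : ℕ} (i : Fin n) (F : EuclideanSpace ℝ (Fin n) → ℝ)
    (x : EuclideanSpace ℝ (Fin n)) : ℝ :=
  fderiv ℝ F x (EuclideanSpace.single i 1)

noncomputable def Lmap (n : ℕ) (α : Fin n → ℝ) : EuclideanSpace ℝ (Fin n) →L[ℝ] ℝ :=
  ∑ j, α j • (EuclideanSpace.proj j : EuclideanSpace ℝ (Fin n) →L[ℝ] ℝ)

lemma Lmap_apply (n : ℕ) (α : Fin n → ℝ) (x : EuclideanSpace ℝ (Fin n)) :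
    Lmap n α x = ∑ j, α j * x j := by
  simp [Lmap, ContinuousLinearMap.sum_apply]

lemma Lmap_single (n : ℕ) (α : Fin n → ℝ) (i : Fin n) :
    Lmap n α (EuclideanSpace.single i 1) = α i := by
  simp [Lmap_apply, EuclideanSpace.single_apply]

lemma pd_linear {n : ℕ} (α : Fin n → ℝ) (f : ℝ → ℝ) (hf : ContDiff ℝ (⊤ : ℕ∞) f) (i : Fin n)
    (x : EuclideanSpace ℝ (Fin n)) :
    pd i (fun x => f (∑ j, α j * x j)) x = α i * deriv f (∑ j, α j * x j) := by
  have hfd : DifferentiableAt ℝ f (Lmap n α x) := hf.differentiable (by simp) _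
  have heq : (fun x : EuclideanSpace ℝ (Fin n) => f (∑ j, α j * x j)) = f ∘ (Lmap n α) := by
    ext y; simp [Lmap_apply]
  rw [pd, heq, fderiv_comp x hfd (Lmap n α).differentiableAt]
  simp only [ContinuousLinearMap.coe_comp', Function.comp_apply, ContinuousLinearMap.fderiv,
    Lmap_single]
  rw [show (α i : ℝ) = α i • (1:ℝ) by simp, map_smul, fderiv_apply_one_eq_deriv]
  simp [Lmap_apply]

lemma contDiff_deriv_top {f : ℝ → ℝ} (hf : ContDiff ℝ (⊤ : ℕ∞) f) : ContDiff ℝ (⊤ : ℕ∞) (deriv f) := by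
  have h' : ContDiff ℝ (((⊤ : ℕ∞) : WithTop ℕ∞) + 1) f := by
    rwa [show (((⊤ : ℕ∞) : WithTop ℕ∞) + 1) = ((⊤ : ℕ∞) : WithTop ℕ∞) from rfl]
  exact (contDiff_succ_iff_deriv.mp h').2.2

lemma pd_pd {n : ℕ} (α : Fin n → ℝ) (f : ℝ → ℝ) (hf : ContDiff ℝ (⊤ : ℕ∞) f) (i j : Fin n)
    (x : EuclideanSpace ℝ (Fin n)) :
    pd i (pd j (fun x => f (∑ k, α k * x k))) x
      = α i * (α j * deriv (deriv f) (∑ k, α k * x k)) := by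
  have hfd : ContDiff ℝ (⊤ : ℕ∞) (deriv f) := contDiff_deriv_top hf
  have h1 : pd j (fun x : EuclideanSpace ℝ (Fin n) => f (∑ k, α k * x k))
      = fun x => α j * deriv f (∑ k, α k * x k) := funext (pd_linear α f hf j)
  rw [h1, pd]
  have hg : DifferentiableAt ℝ (fun x : EuclideanSpace ℝ (Fin n) => deriv f (∑ k, α k * x k)) x := by
    have : (fun x : EuclideanSpace ℝ (Fin n) => deriv f (∑ k, α k * x k)) = deriv f ∘ (Lmap n α) := by
      ext y; simp [Lmap_apply]
    rw [this]
    exact DifferentiableAt.comp x (hfd.differentiable (by simp) _) ((Lmap n α).differentiableAt)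
  have hmul : HasFDerivAt (fun x : EuclideanSpace ℝ (Fin n) => α j * deriv f (∑ k, α k * x k))
      (α j • fderiv ℝ (fun x : EuclideanSpace ℝ (Fin n) => deriv f (∑ k, α k * x k)) x) x :=
    (hg.hasFDerivAt).const_mul (α j)
  rw [hmul.fderiv]
  have := pd_linear α (deriv f) hfd i x
  rw [pd] at this
  simp only [ContinuousLinearMap.smul_apply, smul_eq_mul, this]
  ring

lemma sum_sq_smul {n : ℕ} (α : Fin n → ℝ) (hα : ∑ i, (α i) ^ 2 = 1) (C : ℝ) :
    ∑ k, (α k) ^ 2 * C = C := by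
  rw [← Finset.sum_mul, hα, one_mul]

/-- The quasi-Einstein PDE system on ℝⁿ for translation-invariant
data `Φ(x) = φ(Σᵢ αᵢxᵢ)`, `U(x) = u(Σᵢ αᵢxᵢ)` holds if and only if `φ, u`
satisfy the reduced ODE system (E1)–(E2). -/
theorem stmt0 (n : ℕ) (hn : 3 ≤ n) (m lam : ℝ) (hm : m ≠ 0) (hlam : lam ≤ 0)
    (α : Fin n → ℝ) (hα : ∑ i, (α i) ^ 2 = 1)
    (φ u : ℝ → ℝ) (hφ : ContDiff ℝ (⊤ : ℕ∞) φ) (hu : ContDiff ℝ (⊤ : ℕ∞) u)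
    (hφ0 : ∀ t, φ t ≠ 0) (hu0 : ∀ t, 0 < u t)
    (Φ U : EuclideanSpace ℝ (Fin n) → ℝ)
    (hΦ : ∀ x, Φ x = φ (∑ i, α i * x i))
    (hU : ∀ x, U x = u (∑ i, α i * x i)) :
    ((∀ x, ∀ i j : Fin n, i ≠ j →
        (m / U x) * (pd i (pd j U) x + (pd j Φ x / Φ x) * pd i U x
          + (pd i Φ x / Φ x) * pd j U x)
          = ((n : ℝ) - 2) * pd i (pd j Φ) x / Φ x) ∧
      (∀ x, ∀ i : Fin n,
        (m / U x) * (pd i (pd i U) x + 2 * (pd i Φ x / Φ x) * pd i U x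
          - ∑ k, (pd k Φ x / Φ x) * pd k U x)
          = ((n : ℝ) - 2) * pd i (pd i Φ) x / Φ x
            + (∑ k, pd k (pd k Φ) x) / Φ x
            - ((n : ℝ) - 1) * (∑ k, (pd k Φ x) ^ 2) / (Φ x) ^ 2
            - lam / (Φ x) ^ 2))
    ↔
    (∀ ξ : ℝ,
      ((n : ℝ) - 2) * deriv (deriv φ) ξ / φ ξ
        - (m / u ξ) * (deriv (deriv u) ξ + 2 * (deriv φ ξ / φ ξ) * deriv u ξ) = 0 ∧
      deriv (deriv φ) ξ / φ ξ - ((n : ℝ) - 1) * (deriv φ ξ) ^ 2 / (φ ξ) ^ 2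
        + m * (deriv φ ξ / φ ξ) * (deriv u ξ / u ξ) = lam / (φ ξ) ^ 2) := by
  obtain rfl : Φ = fun x => φ (∑ i, α i * x i) := funext hΦ
  obtain rfl : U = fun x => u (∑ i, α i * x i) := funext hU
  constructor
  · rintro ⟨hod, hdg⟩ ξ
    set x : EuclideanSpace ℝ (Fin n) := WithLp.toLp 2 (fun i => ξ * α i) with hxdef
    have hx : (∑ i, α i * x i) = ξ := by
      rw [show (∑ i, α i * x i) = ∑ i, (α i) ^ 2 * ξ from
        Finset.sum_congr rfl fun i _ => by simp [hxdef]; ring]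
      exact sum_sq_smul α hα ξ
    have hne : (⟨0, by omega⟩ : Fin n) ≠ ⟨1, by omega⟩ := by
      intro h
      simpa using congrArg Fin.val h
    have H01 := hod x ⟨0, by omega⟩ ⟨1, by omega⟩ hne
    have HD := hdg x
    simp only [pd_linear α φ hφ, pd_linear α u hu, pd_pd α φ hφ, pd_pd α u hu, hx] at H01 HD
    have s1 : (∑ k, (α k * deriv φ ξ / φ ξ) * (α k * deriv u ξ))
        = (deriv φ ξ / φ ξ) * deriv u ξ := by
      rw [show (∑ k, (α k * deriv φ ξ / φ ξ) * (α k * deriv u ξ))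
        = ∑ k, (α k) ^ 2 * ((deriv φ ξ / φ ξ) * deriv u ξ) from
        Finset.sum_congr rfl fun k _ => by ring]
      exact sum_sq_smul α hα _
    have s2 : (∑ k, α k * (α k * deriv (deriv φ) ξ)) = deriv (deriv φ) ξ := by
      rw [show (∑ k, α k * (α k * deriv (deriv φ) ξ))
        = ∑ k, (α k) ^ 2 * deriv (deriv φ) ξ from
        Finset.sum_congr rfl fun k _ => by ring]
      exact sum_sq_smul α hα _
    have s3 : (∑ k, (α k * deriv φ ξ) ^ 2) = (deriv φ ξ) ^ 2 := by
      rw [show (∑ k, (α k * deriv φ ξ) ^ 2)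
        = ∑ k, (α k) ^ 2 * (deriv φ ξ) ^ 2 from
        Finset.sum_congr rfl fun k _ => by ring]
      exact sum_sq_smul α hα _
    rw [s1, s2, s3] at HD <;> try skip
    have hAi : ∀ i : Fin n, (α i) ^ 2 *
        ((m / u ξ) * (deriv (deriv u) ξ + 2 * (deriv φ ξ * deriv u ξ / φ ξ))
          - ((n : ℝ) - 2) * deriv (deriv φ) ξ / φ ξ)
        = (m / u ξ) * (deriv φ ξ * deriv u ξ / φ ξ) + deriv (deriv φ) ξ / φ ξ
          - ((n : ℝ) - 1) * (deriv φ ξ) ^ 2 / (φ ξ) ^ 2 - lam / (φ ξ) ^ 2 := by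
      intro i
      linear_combination HD i
    have hA01 : (α ⟨0, by omega⟩ * α ⟨1, by omega⟩) *
        ((m / u ξ) * (deriv (deriv u) ξ + 2 * (deriv φ ξ * deriv u ξ / φ ξ))
          - ((n : ℝ) - 2) * deriv (deriv φ) ξ / φ ξ) = 0 := by
      linear_combination H01
    have h0 := hAi ⟨0, by omega⟩
    have h1 := hAi ⟨1, by omega⟩
    have hC : m / u ξ * (deriv φ ξ * deriv u ξ / φ ξ) + deriv (deriv φ) ξ / φ ξ
        - ((n : ℝ) - 1) * deriv φ ξ ^ 2 / φ ξ ^ 2 - lam / φ ξ ^ 2 = 0 := by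
      have hsq : (m / u ξ * (deriv φ ξ * deriv u ξ / φ ξ) + deriv (deriv φ) ξ / φ ξ - ((n : ℝ) - 1) * deriv φ ξ ^ 2 / φ ξ ^ 2 - lam / φ ξ ^ 2) * (m / u ξ * (deriv φ ξ * deriv u ξ / φ ξ) + deriv (deriv φ) ξ / φ ξ - ((n : ℝ) - 1) * deriv φ ξ ^ 2 / φ ξ ^ 2 - lam / φ ξ ^ 2) = 0 := by
        linear_combination (-(m / u ξ * (deriv φ ξ * deriv u ξ / φ ξ) + deriv (deriv φ) ξ / φ ξ - ((n : ℝ) - 1) * deriv φ ξ ^ 2 / φ ξ ^ 2 - lam / φ ξ ^ 2)) * h1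
          - ((α ⟨1, by omega⟩) ^ 2 * (m / u ξ * (deriv (deriv u) ξ + 2 * (deriv φ ξ * deriv u ξ / φ ξ)) - ((n : ℝ) - 2) * deriv (deriv φ) ξ / φ ξ)) * h0
          + ((α ⟨0, by omega⟩) * (α ⟨1, by omega⟩) * (m / u ξ * (deriv (deriv u) ξ + 2 * (deriv φ ξ * deriv u ξ / φ ξ)) - ((n : ℝ) - 2) * deriv (deriv φ) ξ / φ ξ)) * hA01
      exact mul_self_eq_zero.mp hsq
    have hA : (m / u ξ) * (deriv (deriv u) ξ + 2 * (deriv φ ξ * deriv u ξ / φ ξ))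
        - ((n : ℝ) - 2) * deriv (deriv φ) ξ / φ ξ = 0 := by
      have h1 : ∀ i : Fin n, (α i) ^ 2 *
          ((m / u ξ) * (deriv (deriv u) ξ + 2 * (deriv φ ξ * deriv u ξ / φ ξ))
            - ((n : ℝ) - 2) * deriv (deriv φ) ξ / φ ξ) = 0 := fun i => by
        rw [hAi i, hC]
      have h2 := sum_sq_smul α hα
        ((m / u ξ) * (deriv (deriv u) ξ + 2 * (deriv φ ξ * deriv u ξ / φ ξ))
          - ((n : ℝ) - 2) * deriv (deriv φ) ξ / φ ξ)
      rw [Finset.sum_eq_zero (fun i _ => h1 i)] at h2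
      linarith [h2]
    constructor
    · linear_combination -hA
    · linear_combination hC
  · intro hODE
    constructor
    · intro x i j hij
      obtain ⟨e1, e2⟩ := hODE (∑ k, α k * x k)
      simp only [pd_linear α φ hφ, pd_linear α u hu, pd_pd α φ hφ, pd_pd α u hu]
      linear_combination (-(α i * α j)) * e1
    · intro x i
      obtain ⟨e1, e2⟩ := hODE (∑ k, α k * x k)
      simp only [pd_linear α φ hφ, pd_linear α u hu, pd_pd α φ hφ, pd_pd α u hu]
      have s1 : (∑ k, (α k * deriv φ (∑ k, α k * x k) / φ (∑ k, α k * x k))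
          * (α k * deriv u (∑ k, α k * x k)))
          = (deriv φ (∑ k, α k * x k) / φ (∑ k, α k * x k)) * deriv u (∑ k, α k * x k) := by
        rw [show (∑ k, (α k * deriv φ (∑ k, α k * x k) / φ (∑ k, α k * x k))
          * (α k * deriv u (∑ k, α k * x k)))
          = ∑ k, (α k) ^ 2 * ((deriv φ (∑ k, α k * x k) / φ (∑ k, α k * x k))
            * deriv u (∑ k, α k * x k)) from
          Finset.sum_congr rfl fun k _ => by ring]
        exact sum_sq_smul α hα _
      have s2 : (∑ k, α k * (α k * deriv (deriv φ) (∑ k, α k * x k)))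
          = deriv (deriv φ) (∑ k, α k * x k) := by
        rw [show (∑ k, α k * (α k * deriv (deriv φ) (∑ k, α k * x k)))
          = ∑ k, (α k) ^ 2 * deriv (deriv φ) (∑ k, α k * x k) from
          Finset.sum_congr rfl fun k _ => by ring]
        exact sum_sq_smul α hα _
      have s3 : (∑ k, (α k * deriv φ (∑ k, α k * x k)) ^ 2)
          = (deriv φ (∑ k, α k * x k)) ^ 2 := by
        rw [show (∑ k, (α k * deriv φ (∑ k, α k * x k)) ^ 2)
          = ∑ k, (α k) ^ 2 * (deriv φ (∑ k, α k * x k)) ^ 2 from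
          Finset.sum_congr rfl fun k _ => by ring]
        exact sum_sq_smul α hα _
      rw [s1, s2, s3]
      linear_combination (-(α i) ^ 2) * e1 - e2
end

section
/- Let n ≥ 3 be an integer, C₁ ∈ ℝ, and C₂, C₃, C₄ > 0. Define, for ξ ∈ ℝ with ξ + C₁ ≠ 0, u(ξ) = C₂ |ξ + C₁| exp(−C₃(ξ + C₁)^{n−1}) and φ(ξ) = sign(ξ + C₁) · C₄ exp(C₃(ξ + C₁)^{n−1}). Then u > 0, φ is nowhere vanishing, and on every open interval not meeting {ξ : ξ + C₁ = 0}, φ and u satisfy the ODE system (E1) (n−2)φ''/φ − (m/u)(u'' + 2(φ'/φ)u') = 0 and (E2) φ''/φ − (n−1)(φ')²/φ² + m(φ'/φ)(u'/u) = 0, with m = 2 − n. -/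
/-!
Near any point with `ξ + C₁ ≠ 0`, `sign (ξ + C₁)` is locally constant and `|ξ + C₁|` is a
constant multiple of `ξ + C₁`, so locally `φ = c·e^h` and `u = c₂ (ξ + C₁) e^{-h}` with
`h = C₃ (ξ + C₁)^{n-1}`. For functions of this shape, and `m = 2 - n`, equation (E1) holds
identically in `h`, while (E2) reduces to the Euler-type relation `(ξ + C₁) h'' = (n - 2) h'`,
which a monomial of degree `n - 1` in `ξ + C₁` satisfies.
-/

open Filter Topology Real

def QuasiEinsteinODE (n m : ℝ) (φ u : ℝ → ℝ) (ξ : ℝ) : Prop :=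
  ((n - 2) * deriv (deriv φ) ξ / φ ξ
      - (m / u ξ) * (deriv (deriv u) ξ + 2 * (deriv φ ξ / φ ξ) * deriv u ξ) = 0) ∧
    (deriv (deriv φ) ξ / φ ξ - (n - 1) * (deriv φ ξ) ^ 2 / (φ ξ) ^ 2
      + m * (deriv φ ξ / φ ξ) * (deriv u ξ / u ξ) = 0)

lemma Real.eventually_sign_eq_and_abs_eq {t : ℝ} (ht : t ≠ 0) :
    ∀ᶠ s in 𝓝 t, sign s = sign t ∧ |s| = sign t * s := by
  rcases ht.lt_or_gt with ht | ht
  · filter_upwards [Iio_mem_nhds ht] with s (hs : s < 0)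
    simp [sign_of_neg hs, sign_of_neg ht, abs_of_neg hs]
  · filter_upwards [Ioi_mem_nhds ht] with s (hs : 0 < s)
    simp [sign_of_pos hs, sign_of_pos ht, abs_of_pos hs]

lemma deriv_and_deriv_deriv_eq_of_eventuallyEq {f g g' : ℝ → ℝ} {ξ a : ℝ}
    (hfg : f =ᶠ[𝓝 ξ] g) (hg : ∀ x, HasDerivAt g (g' x) x) (hg' : HasDerivAt g' a ξ) :
    deriv f ξ = g' ξ ∧ deriv (deriv f) ξ = a := by
  have hderiv : deriv f =ᶠ[𝓝 ξ] g' := hfg.deriv.trans (.of_forall fun x => (hg x).deriv)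
  exact ⟨hderiv.eq_of_nhds, hderiv.deriv_eq.trans hg'.deriv⟩

lemma hasDerivAt_const_mul_add_const_pow_succ (a C₁ : ℝ) (k : ℕ) (x : ℝ) :
    HasDerivAt (fun x => a * (x + C₁) ^ (k + 1)) (a * (k + 1) * (x + C₁) ^ k) x :=
  ((((hasDerivAt_id' x).add_const C₁).pow (k + 1)).const_mul a).congr_deriv (by push_cast; ring)

section ExpModel

variable {h h' h'' : ℝ → ℝ} (hh : ∀ x, HasDerivAt h (h' x) x)
  (hh' : ∀ x, HasDerivAt h' (h'' x) x) {C₁ c : ℝ} {f : ℝ → ℝ} {ξ : ℝ}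
include hh hh'

lemma derivs_of_eventuallyEq_const_mul_exp (hf : f =ᶠ[𝓝 ξ] fun x => c * exp (h x)) :
    f ξ = c * exp (h ξ) ∧ deriv f ξ = c * h' ξ * exp (h ξ) ∧
      deriv (deriv f) ξ = c * (h'' ξ + h' ξ ^ 2) * exp (h ξ) := by
  have hd₁ (x : ℝ) : HasDerivAt (fun x => c * exp (h x)) (c * h' x * exp (h x)) x :=
    ((hh x).exp.const_mul c).congr_deriv (by ring)
  have hd₂ : HasDerivAt (fun x => c * h' x * exp (h x))
      (c * (h'' ξ + h' ξ ^ 2) * exp (h ξ)) ξ :=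
    (((hh' ξ).const_mul c).fun_mul (hh ξ).exp).congr_deriv (by ring)
  exact ⟨hf.eq_of_nhds, deriv_and_deriv_deriv_eq_of_eventuallyEq hf hd₁ hd₂⟩

lemma derivs_of_eventuallyEq_const_mul_linear_mul_exp_neg
    (hf : f =ᶠ[𝓝 ξ] fun x => c * (x + C₁) * exp (-h x)) :
    f ξ = c * (ξ + C₁) * exp (-h ξ) ∧
      deriv f ξ = c * (1 - (ξ + C₁) * h' ξ) * exp (-h ξ) ∧
      deriv (deriv f) ξ = c * ((ξ + C₁) * (h' ξ ^ 2 - h'' ξ) - 2 * h' ξ) * exp (-h ξ) := by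
  have hlin (x : ℝ) : HasDerivAt (fun y => y + C₁) 1 x := (hasDerivAt_id x).add_const C₁
  have hd₁ (x : ℝ) : HasDerivAt (fun x => c * (x + C₁) * exp (-h x))
      (c * (1 - (x + C₁) * h' x) * exp (-h x)) x :=
    (((hlin x).const_mul c).fun_mul (hh x).fun_neg.exp).congr_deriv (by ring)
  have hfactor := (((hlin ξ).fun_mul (hh' ξ)).const_sub 1).const_mul c
  have hd₂ : HasDerivAt (fun x => c * (1 - (x + C₁) * h' x) * exp (-h x))
      (c * ((ξ + C₁) * (h' ξ ^ 2 - h'' ξ) - 2 * h' ξ) * exp (-h ξ)) ξ :=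
    (hfactor.fun_mul (hh ξ).fun_neg.exp).congr_deriv (by ring)
  exact ⟨hf.eq_of_nhds, deriv_and_deriv_deriv_eq_of_eventuallyEq hf hd₁ hd₂⟩

lemma quasiEinsteinODE_of_eventuallyEq (n : ℝ) {c₂ : ℝ} {φ u : ℝ → ℝ} (hc : c ≠ 0)
    (hc₂ : c₂ ≠ 0) (hξ : ξ + C₁ ≠ 0)
    (hφ : φ =ᶠ[𝓝 ξ] fun x => c * exp (h x))
    (hu : u =ᶠ[𝓝 ξ] fun x => c₂ * (x + C₁) * exp (-h x))
    (heuler : (ξ + C₁) * h'' ξ = (n - 2) * h' ξ) :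
    QuasiEinsteinODE n (2 - n) φ u ξ := by
  obtain ⟨hφ₀, hφ₁, hφ₂⟩ := derivs_of_eventuallyEq_const_mul_exp hh hh' hφ
  obtain ⟨hu₀, hu₁, hu₂⟩ := derivs_of_eventuallyEq_const_mul_linear_mul_exp_neg hh hh' hu
  have hexp : exp (h ξ) ≠ 0 := exp_ne_zero _
  unfold QuasiEinsteinODE
  rw [hφ₀, hφ₁, hφ₂, hu₀, hu₁, hu₂, exp_neg]
  constructor
  · field_simp
    ring
  · field_simp
    linear_combination heuler

end ExpModel

lemma quasiEinsteinODE_of_eventuallyEq_monomial (j : ℕ) {C₁ C₃ c c₂ ξ : ℝ}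
    {φ u : ℝ → ℝ} (hc : c ≠ 0) (hc₂ : c₂ ≠ 0) (hξ : ξ + C₁ ≠ 0)
    (hφ : φ =ᶠ[𝓝 ξ] fun x => c * exp (C₃ * (x + C₁) ^ (j + 2)))
    (hu : u =ᶠ[𝓝 ξ] fun x => c₂ * (x + C₁) * exp (-(C₃ * (x + C₁) ^ (j + 2)))) :
    QuasiEinsteinODE ((j + 3 : ℕ) : ℝ) (2 - ((j + 3 : ℕ) : ℝ)) φ u ξ := by
  have hh (x : ℝ) : HasDerivAt (fun x => C₃ * (x + C₁) ^ (j + 2))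
      (C₃ * (j + 2) * (x + C₁) ^ (j + 1)) x :=
    (hasDerivAt_const_mul_add_const_pow_succ C₃ C₁ (j + 1) x).congr_deriv (by push_cast; ring)
  have hh' (x : ℝ) := hasDerivAt_const_mul_add_const_pow_succ (C₃ * (j + 2)) C₁ j x
  exact quasiEinsteinODE_of_eventuallyEq hh hh' _ hc hc₂ hξ hφ hu (by push_cast; ring)

theorem stmt2_general (n : ℕ) (hn : 3 ≤ n) (m : ℝ) (hm : m = 2 - (n : ℝ))
    (C₁ C₂ C₃ C₄ : ℝ) (h2 : 0 < C₂) (h4 : 0 < C₄)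
    (u φ : ℝ → ℝ)
    (hu : u = fun ξ => C₂ * |ξ + C₁| * Real.exp (-C₃ * (ξ + C₁) ^ (n - 1)))
    (hφ : φ = fun ξ => Real.sign (ξ + C₁) * C₄ * Real.exp (C₃ * (ξ + C₁) ^ (n - 1))) :
    (∀ ξ : ℝ, ξ + C₁ ≠ 0 → 0 < u ξ ∧ φ ξ ≠ 0) ∧
    (∀ I : Set ℝ, IsOpen I → I.OrdConnected → (∀ ξ ∈ I, ξ + C₁ ≠ 0) →
      ∀ ξ ∈ I,
        (((n : ℝ) - 2) * deriv (deriv φ) ξ / φ ξ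
          - (m / u ξ) * (deriv (deriv u) ξ + 2 * (deriv φ ξ / φ ξ) * deriv u ξ) = 0) ∧
        (deriv (deriv φ) ξ / φ ξ - ((n : ℝ) - 1) * (deriv φ ξ) ^ 2 / (φ ξ) ^ 2
          + m * (deriv φ ξ / φ ξ) * (deriv u ξ / u ξ) = 0)) := by
  obtain ⟨j, rfl⟩ : ∃ j, n = j + 3 := ⟨n - 3, by omega⟩
  subst hm
  rw [show j + 3 - 1 = j + 2 from rfl] at hu hφ
  refine ⟨fun ξ hξ => ⟨?_, ?_⟩, fun I _ _ hI ξ hξI => ?_⟩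
  · have := abs_pos.mpr hξ
    simp only [hu]
    positivity
  · simp only [hφ]
    exact mul_ne_zero (mul_ne_zero (sign_eq_zero_iff.not.mpr hξ) h4.ne') (exp_ne_zero _)
  have hξ := hI ξ hξI
  have hsign : ∀ᶠ x in 𝓝 ξ,
      sign (x + C₁) = sign (ξ + C₁) ∧ |x + C₁| = sign (ξ + C₁) * (x + C₁) :=
    ((continuous_add_const C₁).tendsto ξ).eventually (eventually_sign_eq_and_abs_eq hξ)
  have hφ_loc : φ =ᶠ[𝓝 ξ] fun x =>
      sign (ξ + C₁) * C₄ * exp (C₃ * (x + C₁) ^ (j + 2)) := by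
    filter_upwards [hsign] with x hx
    simp only [hφ, hx.1]
  have hu_loc : u =ᶠ[𝓝 ξ] fun x =>
      sign (ξ + C₁) * C₂ * (x + C₁) * exp (-(C₃ * (x + C₁) ^ (j + 2))) := by
    filter_upwards [hsign] with x hx
    simp only [hu, hx.2, neg_mul]
    ring
  have hs : sign (ξ + C₁) ≠ 0 := sign_eq_zero_iff.not.mpr hξ
  exact quasiEinsteinODE_of_eventuallyEq_monomial j (mul_ne_zero hs h4.ne')
    (mul_ne_zero hs h2.ne') hξ hφ_loc hu_loc

/-- the explicit functions `u, φ` of the classification do satisfy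
the ODE system (E1)–(E2) with `m = 2 - n` on every open interval avoiding
`ξ + C₁ = 0`. -/
theorem stmt2 (n : ℕ) (hn : 3 ≤ n) (m : ℝ) (hm : m = 2 - (n : ℝ))
    (C₁ C₂ C₃ C₄ : ℝ) (h2 : 0 < C₂) (h3 : 0 < C₃) (h4 : 0 < C₄)
    (u φ : ℝ → ℝ)
    (hu : u = fun ξ => C₂ * |ξ + C₁| * Real.exp (-C₃ * (ξ + C₁) ^ (n - 1)))
    (hφ : φ = fun ξ => Real.sign (ξ + C₁) * C₄ * Real.exp (C₃ * (ξ + C₁) ^ (n - 1))) :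
    (∀ ξ : ℝ, ξ + C₁ ≠ 0 → 0 < u ξ ∧ φ ξ ≠ 0) ∧
    (∀ I : Set ℝ, IsOpen I → I.OrdConnected → (∀ ξ ∈ I, ξ + C₁ ≠ 0) →
      ∀ ξ ∈ I,
        (((n : ℝ) - 2) * deriv (deriv φ) ξ / φ ξ
          - (m / u ξ) * (deriv (deriv u) ξ + 2 * (deriv φ ξ / φ ξ) * deriv u ξ) = 0) ∧
        (deriv (deriv φ) ξ / φ ξ - ((n : ℝ) - 1) * (deriv φ ξ) ^ 2 / (φ ξ) ^ 2
          + m * (deriv φ ξ / φ ξ) * (deriv u ξ / u ξ) = 0)) :=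
  stmt2_general n hn m hm C₁ C₂ C₃ C₄ h2 h4 u φ hu hφ
end

section
/- Let n ≥ 3 be an integer, m ≠ 0 a real number, I ⊆ ℝ an open interval, and φ, u : I → ℝ smooth with φ > 0, φ' > 0 and u > 0, satisfying on I the equation (E2) with λ = 0: φ''/φ − (n−1)(φ')²/φ² + m(φ'/φ)(u'/u) = 0. Then there exists a positive constant C such that u(ξ) = C · φ(ξ)^{(n−1)/m} · (φ'(ξ))^{−1/m} for all ξ ∈ I. -/
/-- equation (E2) with `λ = 0` determines `u` in terms of `φ` as
`u = C φ^{(n-1)/m} (φ')^{-1/m}` for some positive constant `C`. -/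
theorem stmt6 (n : ℕ) (hn : 3 ≤ n) (m : ℝ) (hm : m ≠ 0)
    (I : Set ℝ) (hI : IsOpen I) (hI' : I.OrdConnected)
    (φ u : ℝ → ℝ) (hφ : ContDiffOn ℝ (⊤ : ℕ∞) φ I) (hu : ContDiffOn ℝ (⊤ : ℕ∞) u I)
    (hφ0 : ∀ ξ ∈ I, 0 < φ ξ) (hφ' : ∀ ξ ∈ I, 0 < deriv φ ξ)
    (hu0 : ∀ ξ ∈ I, 0 < u ξ)
    (hE2 : ∀ ξ ∈ I, deriv (deriv φ) ξ / φ ξ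
      - ((n : ℝ) - 1) * (deriv φ ξ) ^ 2 / (φ ξ) ^ 2
      + m * (deriv φ ξ / φ ξ) * (deriv u ξ / u ξ) = 0) :
    ∃ C : ℝ, 0 < C ∧ ∀ ξ ∈ I,
      u ξ = C * φ ξ ^ (((n : ℝ) - 1) / m) * (deriv φ ξ) ^ (-(1 / m)) := by
  rcases Set.eq_empty_or_nonempty I with hemp | ⟨ξ₀, hξ₀⟩
  · exact ⟨1, one_pos, fun ξ hξ => by simp [hemp] at hξ⟩
  set g : ℝ → ℝ := fun ξ => Real.log (u ξ) - (((n : ℝ) - 1) / m) * Real.log (φ ξ)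
      + (1 / m) * Real.log (deriv φ ξ) with hg
  have hφd : ∀ ξ ∈ I, DifferentiableAt ℝ φ ξ := fun ξ hξ =>
    (hφ.differentiableOn (by simp)).differentiableAt (hI.mem_nhds hξ)
  have hφ'cd : ContDiffOn ℝ (⊤ : ℕ∞) (deriv φ) I := hφ.deriv_of_isOpen hI (by simp)
  have hφ'd : ∀ ξ ∈ I, DifferentiableAt ℝ (deriv φ) ξ := fun ξ hξ =>
    (hφ'cd.differentiableOn (by simp)).differentiableAt (hI.mem_nhds hξ)
  have hud : ∀ ξ ∈ I, DifferentiableAt ℝ u ξ := fun ξ hξ =>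
    (hu.differentiableOn (by simp)).differentiableAt (hI.mem_nhds hξ)
  have key : ∀ ξ ∈ I, HasDerivAt g 0 ξ := by
    intro ξ hξ
    have h1 : HasDerivAt (fun x => Real.log (u x)) (deriv u ξ / u ξ) ξ :=
      (hud ξ hξ).hasDerivAt.log (hu0 ξ hξ).ne'
    have h2 : HasDerivAt (fun x => Real.log (φ x)) (deriv φ ξ / φ ξ) ξ :=
      (hφd ξ hξ).hasDerivAt.log (hφ0 ξ hξ).ne'
    have h3 : HasDerivAt (fun x => Real.log (deriv φ x))
        (deriv (deriv φ) ξ / deriv φ ξ) ξ :=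
      (hφ'd ξ hξ).hasDerivAt.log (hφ' ξ hξ).ne'
    have hgd : HasDerivAt g
        (deriv u ξ / u ξ - (((n : ℝ) - 1) / m) * (deriv φ ξ / φ ξ)
          + (1 / m) * (deriv (deriv φ) ξ / deriv φ ξ)) ξ :=
      (h1.sub (h2.const_mul _)).add (h3.const_mul _)
    have hE := hE2 ξ hξ
    have hφne : φ ξ ≠ 0 := (hφ0 ξ hξ).ne'
    have hφ'ne : deriv φ ξ ≠ 0 := (hφ' ξ hξ).ne'
    have hune : u ξ ≠ 0 := (hu0 ξ hξ).ne'
    have : (deriv u ξ / u ξ - (((n : ℝ) - 1) / m) * (deriv φ ξ / φ ξ)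
          + (1 / m) * (deriv (deriv φ) ξ / deriv φ ξ)) = 0 := by
      have hfac : (deriv u ξ / u ξ - (((n : ℝ) - 1) / m) * (deriv φ ξ / φ ξ)
          + (1 / m) * (deriv (deriv φ) ξ / deriv φ ξ))
          = φ ξ / (m * deriv φ ξ) * (deriv (deriv φ) ξ / φ ξ
            - ((n : ℝ) - 1) * (deriv φ ξ) ^ 2 / (φ ξ) ^ 2
            + m * (deriv φ ξ / φ ξ) * (deriv u ξ / u ξ)) := by
        field_simp
        ring
      rw [hfac, hE, mul_zero]
    rwa [this] at hgd
  have hconv : Convex ℝ I := hI'.convex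
  have hgc : ∀ ξ ∈ I, g ξ = g ξ₀ := by
    intro ξ hξ
    refine hconv.is_const_of_fderivWithin_eq_zero (fun x hx => ((key x hx).differentiableAt).differentiableWithinAt) ?_ hξ hξ₀
    intro x hx
    have h := ((key x hx).hasFDerivAt.hasFDerivWithinAt).fderivWithin (hI.uniqueDiffOn x hx)
    rw [h]; ext y; simp
  refine ⟨Real.exp (g ξ₀), Real.exp_pos _, fun ξ hξ => ?_⟩
  have hφpos := hφ0 ξ hξ
  have hφ'pos := hφ' ξ hξ
  have hupos := hu0 ξ hξ
  have hrw1 : φ ξ ^ (((n : ℝ) - 1) / m) = Real.exp ((((n : ℝ) - 1) / m) * Real.log (φ ξ)) := by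
    rw [Real.rpow_def_of_pos hφpos, mul_comm]
  have hrw2 : (deriv φ ξ) ^ (-(1 / m)) = Real.exp ((-(1 / m)) * Real.log (deriv φ ξ)) := by
    rw [Real.rpow_def_of_pos hφ'pos, mul_comm]
  rw [hrw1, hrw2, ← Real.exp_add, ← Real.exp_add]
  have hlog : Real.log (u ξ) = g ξ₀ + ((n : ℝ) - 1) / m * Real.log (φ ξ)
      + -(1 / m) * Real.log (deriv φ ξ) := by
    have := hgc ξ hξ
    simp only [hg] at this
    linarith
  calc u ξ = Real.exp (Real.log (u ξ)) := (Real.exp_log hupos).symm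
    _ = _ := by rw [hlog]
end

section
/- Let n ≥ 3 be an integer, m = 1, λ = 0, I ⊆ ℝ an open interval, and φ, u : I → ℝ smooth with φ > 0, φ' > 0 and u > 0, satisfying on I the ODE system (E1) (n−2)φ''/φ − (1/u)(u'' + 2(φ'/φ)u') = 0 and (E2) φ''/φ − (n−1)(φ')²/φ² + (φ'/φ)(u'/u) = 0. Then there exist real constants C₁, C₂ ≠ 0, C₃ and a differentiable function F : (0,∞) → ℝ with F'(t) = exp(C₁/(2 t^{2(n−1)})) / t^{n/2} for all t > 0, such that F(φ(ξ)) = C₂·ξ + C₃ for all ξ ∈ I; equivalently, (φ'(ξ))² = C₂² · φ(ξ)ⁿ · exp(−C₁/φ(ξ)^{2(n−1)}) for all ξ ∈ I. -/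
private lemma constOn {I : Set ℝ} (hC : Convex ℝ I) {f : ℝ → ℝ}
    (h : ∀ x ∈ I, HasDerivAt f 0 x) {x y : ℝ} (hx : x ∈ I) (hy : y ∈ I) : f x = f y := by
  have := hC.norm_image_sub_le_of_norm_hasDerivWithin_le (C := 0) (f' := fun _ => (0:ℝ))
    (fun z hz => (h z hz).hasDerivWithinAt) (fun z hz => by simp) hx hy
  simp only [zero_mul, norm_le_zero_iff, sub_eq_zero] at this
  exact this.symm

private lemma buildF (n : ℕ) (C₁ : ℝ) :
    ∃ F : ℝ → ℝ, ∀ t : ℝ, 0 < t →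
      HasDerivAt F (Real.exp (C₁ / (2 * t ^ (2 * (n - 1)))) / t ^ ((n : ℝ) / 2)) t := by
  set g : ℝ → ℝ := fun t => Real.exp (C₁ / (2 * t ^ (2 * (n - 1)))) / t ^ ((n : ℝ) / 2) with hg
  have hgc : ContinuousOn g (Set.Ioi (0:ℝ)) := by
    apply ContinuousOn.div
    · apply Real.continuous_exp.comp_continuousOn
      apply ContinuousOn.div continuousOn_const
      · exact (continuous_const.mul (continuous_pow _)).continuousOn
      · intro t ht; have : (0:ℝ) < t := ht; positivity
    · exact fun t ht => (Real.continuousAt_rpow_const t _ (Or.inl (ne_of_gt ht))).continuousWithinAt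
    · intro t ht; exact (Real.rpow_pos_of_pos ht _).ne'
  refine ⟨fun t => ∫ s in (1:ℝ)..t, g s, fun t ht => ?_⟩
  have hsub : Set.uIcc (1:ℝ) t ⊆ Set.Ioi (0:ℝ) := by
    intro s hs
    have := hs.1
    have h1 : (0:ℝ) < min 1 t := lt_min one_pos ht
    exact lt_of_lt_of_le h1 (by simpa [Set.uIcc] using this)
  have hint : IntervalIntegrable g MeasureTheory.volume 1 t :=
    (hgc.mono hsub).intervalIntegrable
  exact intervalIntegral.integral_hasDerivAt_right hint
    (hgc.stronglyMeasurableAtFilter isOpen_Ioi t ht)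
    (hgc.continuousAt (isOpen_Ioi.mem_nhds ht))

/-- classification in the case `m = 1`, `λ = 0`: the conformal
factor `φ` is given implicitly by `F(φ(ξ)) = C₂ξ + C₃` where
`F'(t) = exp(C₁/(2t^{2(n-1)}))/t^{n/2}`; equivalently
`(φ')² = C₂² φⁿ exp(-C₁/φ^{2(n-1)})`. -/
theorem stmt12 (n : ℕ) (hn : 3 ≤ n)
    (I : Set ℝ) (hI : IsOpen I) (hI' : I.OrdConnected)
    (φ u : ℝ → ℝ) (hφ : ContDiffOn ℝ (⊤ : ℕ∞) φ I) (hu : ContDiffOn ℝ (⊤ : ℕ∞) u I)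
    (hφ0 : ∀ ξ ∈ I, 0 < φ ξ) (hφ' : ∀ ξ ∈ I, 0 < deriv φ ξ)
    (hu0 : ∀ ξ ∈ I, 0 < u ξ)
    (hE1 : ∀ ξ ∈ I, ((n : ℝ) - 2) * deriv (deriv φ) ξ / φ ξ
      - (1 / u ξ) * (deriv (deriv u) ξ + 2 * (deriv φ ξ / φ ξ) * deriv u ξ) = 0)
    (hE2 : ∀ ξ ∈ I, deriv (deriv φ) ξ / φ ξ
      - ((n : ℝ) - 1) * (deriv φ ξ) ^ 2 / (φ ξ) ^ 2
      + (deriv φ ξ / φ ξ) * (deriv u ξ / u ξ) = 0) :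
    ∃ C₁ C₂ C₃ : ℝ, C₂ ≠ 0 ∧
      (∃ F : ℝ → ℝ,
        (∀ t : ℝ, 0 < t →
          HasDerivAt F (Real.exp (C₁ / (2 * t ^ (2 * (n - 1)))) / t ^ ((n : ℝ) / 2)) t) ∧
        (∀ ξ ∈ I, F (φ ξ) = C₂ * ξ + C₃)) ∧
      (∀ ξ ∈ I, (deriv φ ξ) ^ 2
        = C₂ ^ 2 * (φ ξ) ^ n * Real.exp (-C₁ / (φ ξ) ^ (2 * (n - 1)))) := by
  rcases I.eq_empty_or_nonempty with hIe | ⟨xx0, hxx0⟩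
  · obtain ⟨F, hF⟩ := buildF n 0
    exact ⟨0, 1, 0, one_ne_zero, ⟨F, hF, by simp [hIe]⟩, by simp [hIe]⟩
  obtain ⟨k, rfl⟩ : ∃ k, n = k + 3 := ⟨n - 3, by omega⟩
  have hφd : ∀ x ∈ I, HasDerivAt φ (deriv φ x) x := fun x hx =>
    ((hφ.differentiableOn (by simp)).differentiableAt (hI.mem_nhds hx)).hasDerivAt
  have hud : ∀ x ∈ I, HasDerivAt u (deriv u x) x := fun x hx =>
    ((hu.differentiableOn (by simp)).differentiableAt (hI.mem_nhds hx)).hasDerivAt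
  have hφ2 : ContDiffOn ℝ (⊤ : ℕ∞) (deriv φ) I := hφ.deriv_of_isOpen hI (by simp)
  have hu2 : ContDiffOn ℝ (⊤ : ℕ∞) (deriv u) I := hu.deriv_of_isOpen hI (by simp)
  have hφdd : ∀ x ∈ I, HasDerivAt (deriv φ) (deriv (deriv φ) x) x := fun x hx =>
    ((hφ2.differentiableOn (by simp)).differentiableAt (hI.mem_nhds hx)).hasDerivAt
  have hudd : ∀ x ∈ I, HasDerivAt (deriv u) (deriv (deriv u) x) x := fun x hx =>
    ((hu2.differentiableOn (by simp)).differentiableAt (hI.mem_nhds hx)).hasDerivAt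
  -- solved forms of the two ODEs
  have hp2 : ∀ x ∈ I, deriv (deriv φ) x
      = (((k:ℝ)+2) * (deriv φ x)^2 * u x - φ x * deriv φ x * deriv u x) / (φ x * u x) := by
    intro x hx
    have h := hE2 x hx
    have hp := (hφ0 x hx).ne'
    have hu0' := (hu0 x hx).ne'
    rw [eq_div_iff (by positivity : φ x * u x ≠ 0)]
    field_simp at h
    push_cast at h
    refine mul_left_cancel₀ (pow_ne_zero 2 hp) ?_
    linear_combination (φ x ^ 2) * h
  have hu2' : ∀ x ∈ I, deriv (deriv u) x
      = (((k:ℝ)+1) * deriv (deriv φ) x * u x - 2 * deriv φ x * deriv u x) / φ x := by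
    intro x hx
    have h := hE1 x hx
    have hp := (hφ0 x hx).ne'
    have hu0' := (hu0 x hx).ne'
    rw [eq_div_iff hp]
    field_simp at h
    push_cast at h
    refine mul_left_cancel₀ hp ?_
    linear_combination (-φ x) * h
  -- the conserved quantity S
  set S : ℝ → ℝ := fun x => φ x ^ (2*k+4) *
      (((k:ℝ)+1) * (deriv φ x * u x) - 2 * (φ x * deriv u x)) /
      (2*((k:ℝ)+2) * (deriv φ x * u x)) with hSdef
  have hS0 : ∀ x ∈ I, HasDerivAt S 0 x := by
    intro x hx
    have hp0 := hφ0 x hx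
    have hp1 := hφ' x hx
    have hu0x := hu0 x hx
    have num := (((hφd x hx).pow (2*k+4)).mul
      ((((hφdd x hx).mul (hud x hx)).const_mul ((k:ℝ)+1)).sub
       (((hφd x hx).mul (hudd x hx)).const_mul 2)))
    have den := ((hφdd x hx).mul (hud x hx)).const_mul (2*((k:ℝ)+2))
    have hne : 2*((k:ℝ)+2) * (deriv φ x * u x) ≠ 0 := by positivity
    have H := num.div den hne
    convert H using 1
    · rfl
    · rfl
    · rfl
    simp only [Pi.mul_apply, Pi.pow_apply, Pi.sub_apply, Pi.div_apply]
    rw [hu2' x hx, hp2 x hx]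
    have hpne := hp0.ne'
    have hune := hu0x.ne'
    have h1ne := hp1.ne'
    simp only [show 2*k+4-1 = 2*k+3 from rfl]
    push_cast
    field_simp
    ring
  have hconv : Convex ℝ I := hI'.convex
  set C₁ := S xx0 with hC1def
  have hC1 : ∀ x ∈ I, S x = C₁ := fun x hx => constOn hconv hS0 hx hxx0
  -- the quantity E = φ' φ^{-n/2} exp(C₁/(2 φ^{2(n-1)})) is constant
  set E : ℝ → ℝ := fun x => deriv φ x *
      (φ x ^ (-(((k:ℝ)+3)/2)) * Real.exp (C₁ / (2 * φ x ^ (2*k+4)))) with hEdef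
  have hE0 : ∀ x ∈ I, HasDerivAt E 0 x := by
    intro x hx
    have hp0 := hφ0 x hx
    have hp1 := hφ' x hx
    have hu0x := hu0 x hx
    have r := (hφd x hx).rpow_const (p := -(((k:ℝ)+3)/2)) (Or.inl hp0.ne')
    have hden := ((hφd x hx).pow (2*k+4)).const_mul (2:ℝ)
    have hdenne : (2:ℝ) * φ x ^ (2*k+4) ≠ 0 := by positivity
    have hinner := (hasDerivAt_const x C₁).div hden hdenne
    have H := (hφdd x hx).mul (r.mul hinner.exp)
    convert H using 1
    · rfl
    · rfl
    · rfl
    simp only [Pi.mul_apply, Pi.pow_apply, Pi.sub_apply, Pi.div_apply]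
    rw [Real.rpow_sub_one hp0.ne']
    set X := Real.exp (C₁ / (2 * φ x ^ (2*k+4))) with hXdef
    have hX : 0 < X := Real.exp_pos _
    set R := φ x ^ (-(((k:ℝ)+3)/2)) with hRdef
    have hR : 0 < R := Real.rpow_pos_of_pos hp0 _
    rw [← hC1 x hx]
    simp only [hSdef]
    rw [hp2 x hx]
    have hpne := hp0.ne'
    have hune := hu0x.ne'
    have h1ne := hp1.ne'
    simp only [show 2*k+4-1 = 2*k+3 from rfl]
    push_cast
    field_simp
    ring
  set C₂ := E xx0 with hC2def
  have hC2pos : 0 < C₂ := by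
    rw [hC2def, hEdef]
    exact mul_pos (hφ' xx0 hxx0)
      (mul_pos (Real.rpow_pos_of_pos (hφ0 xx0 hxx0) _) (Real.exp_pos _))
  have hC2 : ∀ x ∈ I, E x = C₂ := fun x hx => constOn hconv hE0 hx hxx0
  obtain ⟨F, hF⟩ := buildF (k + 3) C₁
  -- F ∘ φ is affine
  have hG0 : ∀ x ∈ I, HasDerivAt (fun y => F (φ y) - C₂ * y) 0 x := by
    intro x hx
    have hp0 := hφ0 x hx
    have h1 := (hF (φ x) hp0).comp x (hφd x hx)
    have h2 := h1.sub ((hasDerivAt_id x).const_mul C₂)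
    convert h2 using 1
    · rfl
    · rfl
    · rfl
    rw [← hC2 x hx]
    simp only [hEdef, Function.comp]
    rw [show 2*(k+3-1) = 2*k+4 from rfl,
      show ((k+3:ℕ):ℝ)/2 = ((k:ℝ)+3)/2 by push_cast; ring,
      Real.rpow_neg hp0.le, div_eq_mul_inv]
    ring
  refine ⟨C₁, C₂, F (φ xx0) - C₂ * xx0, hC2pos.ne', ⟨F, hF, ?_⟩, ?_⟩
  · intro ξ hξ
    have := constOn hconv hG0 hξ hxx0
    linarith [this]
  · intro ξ hξ
    have hp0 := hφ0 ξ hξ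
    have hEx := hC2 ξ hξ
    simp only [hEdef] at hEx
    rw [show 2*(k+3-1) = 2*k+4 from rfl]
    set X := Real.exp (C₁ / (2 * φ ξ ^ (2*k+4))) with hXdef
    set R := φ ξ ^ (-(((k:ℝ)+3)/2)) with hRdef
    have hPne : (φ ξ : ℝ) ^ (2*k+4) ≠ 0 := by positivity
    have key1 : R * R * φ ξ ^ (k+3) = 1 := by
      rw [hRdef, ← Real.rpow_natCast (φ ξ) (k+3), ← Real.rpow_add hp0, ← Real.rpow_add hp0,
        show (-(((k:ℝ)+3)/2)) + (-(((k:ℝ)+3)/2)) + ((k+3:ℕ):ℝ) = 0 by push_cast; ring,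
        Real.rpow_zero]
    have key2 : X * X * Real.exp (-C₁ / φ ξ ^ (2*k+4)) = 1 := by
      rw [hXdef, ← Real.exp_add, ← Real.exp_add, ← Real.exp_zero]
      congr 1
      field_simp
      ring
    calc (deriv φ ξ) ^ 2
        = (deriv φ ξ) ^ 2 * ((R * R * φ ξ ^ (k+3)) * (X * X * Real.exp (-C₁ / φ ξ ^ (2*k+4)))) := by
          rw [key1, key2]; ring
      _ = (deriv φ ξ * (R * X)) ^ 2 * φ ξ ^ (k+3) * Real.exp (-C₁ / φ ξ ^ (2*k+4)) := by ring
      _ = C₂ ^ 2 * φ ξ ^ (k+3) * Real.exp (-C₁ / φ ξ ^ (2*k+4)) := by rw [hEx]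
end

section
/- Let n ≥ 3 be an integer, C > 0, C₂ ≠ 0 and C₃ real constants, and let I = {ξ ∈ ℝ : C₂(C₂ξ + C₃) < 0}. Define on I the functions φ(ξ) = ((n−2)²(C₂ξ + C₃)²/4)^{−1/(n−2)} and u(ξ) = −2C/(C₂(n−2)(C₂ξ + C₃)). Then φ > 0, u > 0 on I, and φ and u satisfy on I the ODE system (E1) (n−2)φ''/φ − (1/u)(u'' + 2(φ'/φ)u') = 0 and (E2) φ''/φ − (n−1)(φ')²/φ² + (φ'/φ)(u'/u) = 0 (i.e. the system with m = 1 and λ = 0). -/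
/-!
Put `t = C₂ξ + C₃` and `p = -1/(n-2)`. Then `φ = (c t²)^p` with `c = (n-2)²/4` and `u = k/t`,
so `φ'/φ = 2pC₂/t`, `φ''/φ = 2p(2p-1)C₂²/t²`, `u'/u = -C₂/t` and `u''/u = 2C₂²/t²`.
After clearing the common factor `C₂²/t²`, (E1) reads `2(n-2)p(2p-1) - 2 + 4p = 0` and (E2)
reads `-4p(1 + (n-2)p) = 0`; both hold because `(n-2)p = -1`.
-/

open Filter Topology

theorem deriv_deriv_eq_of_hasDerivAt {f f' : ℝ → ℝ} {f'' x : ℝ} {U : Set ℝ} (hU : U ∈ 𝓝 x)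
    (hf : ∀ y ∈ U, HasDerivAt f (f' y) y) (hf' : HasDerivAt f' f'' x) :
    deriv (deriv f) x = f'' := by
  have h : deriv f =ᶠ[𝓝 x] f' := eventually_of_mem hU fun y hy => (hf y hy).deriv
  rw [h.deriv_eq, hf'.deriv]

section Affine

variable {a b : ℝ}

theorem affine_ne_zero_mem_nhds {x : ℝ} (hx : a * x + b ≠ 0) : {y : ℝ | a * y + b ≠ 0} ∈ 𝓝 x :=
  (isOpen_ne_fun (by fun_prop) continuous_const).mem_nhds hx

theorem hasDerivAt_affine (x : ℝ) : HasDerivAt (fun x => a * x + b) a x := by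
  simpa using ((hasDerivAt_id' x).const_mul a).add_const b

theorem hasDerivAt_div_affine_pow (k : ℝ) (m : ℕ) {x : ℝ} (hx : a * x + b ≠ 0) :
    HasDerivAt (fun x => k / (a * x + b) ^ m) (-(m * k * a) / (a * x + b) ^ (m + 1)) x := by
  refine ((hasDerivAt_const x k).fun_div ((hasDerivAt_affine x).fun_pow m)
    (pow_ne_zero m hx)).congr_deriv ?_
  rcases m with _ | m
  · simp
  · push_cast
    field_simp
    ring

theorem deriv_div_affine (k : ℝ) {x : ℝ} (hx : a * x + b ≠ 0) :
    deriv (fun x => k / (a * x + b)) x = -(k * a) / (a * x + b) ^ 2 := by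
  simpa using (hasDerivAt_div_affine_pow (a := a) (b := b) k 1 hx).deriv

theorem deriv_deriv_div_affine (k : ℝ) {x : ℝ} (hx : a * x + b ≠ 0) :
    deriv (deriv fun x => k / (a * x + b)) x = 2 * k * a ^ 2 / (a * x + b) ^ 3 := by
  have h : ∀ y ∈ {y : ℝ | a * y + b ≠ 0},
      HasDerivAt (fun x => k / (a * x + b)) (-(k * a) / (a * y + b) ^ 2) y := fun y hy => by
    simpa using hasDerivAt_div_affine_pow (a := a) (b := b) k 1 hy
  rw [deriv_deriv_eq_of_hasDerivAt (affine_ne_zero_mem_nhds hx) h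
    (hasDerivAt_div_affine_pow _ 2 hx)]
  push_cast
  ring

theorem hasDerivAt_rpow_mul_affine_sq {c : ℝ} (hc : 0 < c) (p : ℝ) {x : ℝ}
    (hx : a * x + b ≠ 0) :
    HasDerivAt (fun x => (c * (a * x + b) ^ 2) ^ p)
      (2 * p * a / (a * x + b) * (c * (a * x + b) ^ 2) ^ p) x := by
  have hpos : 0 < c * (a * x + b) ^ 2 := by positivity
  refine ((((hasDerivAt_affine x).fun_pow 2).const_mul c).rpow_const (p := p)
    (Or.inl hpos.ne')).congr_deriv ?_
  rw [Real.rpow_sub hpos, Real.rpow_one]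
  field_simp
  ring

theorem deriv_deriv_rpow_mul_affine_sq {c : ℝ} (hc : 0 < c) (p : ℝ) {x : ℝ}
    (hx : a * x + b ≠ 0) :
    deriv (deriv fun x => (c * (a * x + b) ^ 2) ^ p) x =
      2 * p * (2 * p - 1) * a ^ 2 / (a * x + b) ^ 2 * (c * (a * x + b) ^ 2) ^ p := by
  have h := (hasDerivAt_const x (2 * p * a)).fun_div (hasDerivAt_affine x) hx |>.fun_mul
    (hasDerivAt_rpow_mul_affine_sq hc p hx)
  rw [deriv_deriv_eq_of_hasDerivAt (affine_ne_zero_mem_nhds hx)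
    (fun y hy => hasDerivAt_rpow_mul_affine_sq hc p hy) h]
  field_simp
  ring

end Affine
theorem stmt13_general (n : ℕ) (hn : 3 ≤ n) (C C₂ C₃ : ℝ) (hC : 0 < C)
    (I : Set ℝ) (hIdef : I = {ξ : ℝ | C₂ * (C₂ * ξ + C₃) < 0})
    (φ u : ℝ → ℝ)
    (hφ : φ = fun ξ =>
      (((n : ℝ) - 2) ^ 2 * (C₂ * ξ + C₃) ^ 2 / 4) ^ (-(1 / ((n : ℝ) - 2))))
    (hu : u = fun ξ => -2 * C / (C₂ * ((n : ℝ) - 2) * (C₂ * ξ + C₃))) :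
    (∀ ξ ∈ I, 0 < φ ξ) ∧ (∀ ξ ∈ I, 0 < u ξ) ∧
    (∀ ξ ∈ I, ((n : ℝ) - 2) * deriv (deriv φ) ξ / φ ξ
      - (1 / u ξ) * (deriv (deriv u) ξ + 2 * (deriv φ ξ / φ ξ) * deriv u ξ) = 0) ∧
    (∀ ξ ∈ I, deriv (deriv φ) ξ / φ ξ
      - ((n : ℝ) - 1) * (deriv φ ξ) ^ 2 / (φ ξ) ^ 2
      + (deriv φ ξ / φ ξ) * (deriv u ξ / u ξ) = 0) := by
  have ha : (0 : ℝ) < n - 2 := by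
    have : (3 : ℝ) ≤ n := by exact_mod_cast hn
    linarith
  have hc : (0 : ℝ) < (n - 2) ^ 2 / 4 := by positivity
  have hφ' : φ = fun ξ => ((n - 2) ^ 2 / 4 * (C₂ * ξ + C₃) ^ 2) ^ (-(1 / ((n : ℝ) - 2))) := by
    simp only [hφ, mul_div_right_comm]
  have hu' : u = fun ξ => -2 * C / (C₂ * (n - 2)) / (C₂ * ξ + C₃) := by
    simp only [hu, div_div]
  have ht : ∀ ξ ∈ I, C₂ * ξ + C₃ ≠ 0 := by
    rintro ξ hξ h0
    simp [hIdef, h0] at hξ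
  have hX : ∀ ξ ∈ I, 0 < ((n - 2) ^ 2 / 4 * (C₂ * ξ + C₃) ^ 2) ^ (-(1 / ((n : ℝ) - 2))) := by
    intro ξ hξ
    have := ht ξ hξ
    positivity
  refine ⟨fun ξ hξ => hφ' ▸ hX ξ hξ, fun ξ hξ => ?_, fun ξ hξ => ?_, fun ξ hξ => ?_⟩
  · have hξ' : C₂ * (n - 2) * (C₂ * ξ + C₃) < 0 := by
      simp only [hIdef, Set.mem_ofPred_eq] at hξ
      nlinarith
    rw [hu]
    exact div_pos_of_neg_of_neg (by linarith) hξ'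
  all_goals
    rw [hφ', hu', deriv_deriv_rpow_mul_affine_sq hc _ (ht ξ hξ),
      (hasDerivAt_rpow_mul_affine_sq hc _ (ht ξ hξ)).deriv, deriv_div_affine _ (ht ξ hξ)]
  · rw [deriv_deriv_div_affine _ (ht ξ hξ)]
    field_simp [ht ξ hξ, (hX ξ hξ).ne', ha.ne', hC.ne']
    ring
  · field_simp [ht ξ hξ, (hX ξ hξ).ne', ha.ne', hC.ne']
    ring

/-- the explicit example with `m = 1`, `λ = 0`:
`φ(ξ) = ((n-2)²(C₂ξ+C₃)²/4)^{-1/(n-2)}` and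
`u(ξ) = -2C/(C₂(n-2)(C₂ξ+C₃))` satisfy the ODE system on the half-space
`C₂(C₂ξ+C₃) < 0`. -/
theorem stmt13 (n : ℕ) (hn : 3 ≤ n) (C C₂ C₃ : ℝ) (hC : 0 < C) (hC₂ : C₂ ≠ 0)
    (I : Set ℝ) (hIdef : I = {ξ : ℝ | C₂ * (C₂ * ξ + C₃) < 0})
    (φ u : ℝ → ℝ)
    (hφ : φ = fun ξ =>
      (((n : ℝ) - 2) ^ 2 * (C₂ * ξ + C₃) ^ 2 / 4) ^ (-(1 / ((n : ℝ) - 2))))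
    (hu : u = fun ξ => -2 * C / (C₂ * ((n : ℝ) - 2) * (C₂ * ξ + C₃))) :
    (∀ ξ ∈ I, 0 < φ ξ) ∧ (∀ ξ ∈ I, 0 < u ξ) ∧
    (∀ ξ ∈ I, ((n : ℝ) - 2) * deriv (deriv φ) ξ / φ ξ
      - (1 / u ξ) * (deriv (deriv u) ξ + 2 * (deriv φ ξ / φ ξ) * deriv u ξ) = 0) ∧
    (∀ ξ ∈ I, deriv (deriv φ) ξ / φ ξ
      - ((n : ℝ) - 1) * (deriv φ ξ) ^ 2 / (φ ξ) ^ 2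
      + (deriv φ ξ / φ ξ) * (deriv u ξ / u ξ) = 0) :=
  stmt13_general n hn C C₂ C₃ hC I hIdef φ u hφ hu
end

section
/- Let n ≥ 3 be an integer, C₁ ∈ ℝ, C₂ ≠ 0, C > 0 real constants, I ⊆ ℝ an open interval, and φ : I → ℝ a smooth function with φ > 0 and φ' > 0 satisfying (φ'(ξ))² = C₂² · φ(ξ)ⁿ · exp(−C₁/φ(ξ)^{2(n−1)}) for all ξ ∈ I. Define u = C·φ^{n−1}/φ' on I. Then u > 0, and φ and u satisfy on I the ODE system (E1) (n−2)φ''/φ − (1/u)(u'' + 2(φ'/φ)u') = 0 and (E2) φ''/φ − (n−1)(φ')²/φ² + (φ'/φ)(u'/u) = 0 (i.e. the system with m = 1 and λ = 0). -/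
/-- converse of the `m = 1` classification: if
`(φ')² = C₂² φⁿ exp(-C₁/φ^{2(n-1)})` and `u = Cφ^{n-1}/φ'`, then `u > 0` and
`φ, u` satisfy the ODE system (E1)–(E2) with `m = 1`, `λ = 0`. -/
theorem stmt17 (n : ℕ) (hn : 3 ≤ n) (C₁ C₂ C : ℝ) (hC₂ : C₂ ≠ 0) (hC : 0 < C)
    (I : Set ℝ) (hI : IsOpen I) (hI' : I.OrdConnected)
    (φ : ℝ → ℝ) (hφ : ContDiffOn ℝ (⊤ : ℕ∞) φ I)
    (hφ0 : ∀ ξ ∈ I, 0 < φ ξ) (hφ' : ∀ ξ ∈ I, 0 < deriv φ ξ)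
    (hode : ∀ ξ ∈ I, (deriv φ ξ) ^ 2
      = C₂ ^ 2 * (φ ξ) ^ n * Real.exp (-C₁ / (φ ξ) ^ (2 * (n - 1))))
    (u : ℝ → ℝ) (hu : u = fun ξ => C * (φ ξ) ^ (n - 1) / deriv φ ξ) :
    (∀ ξ ∈ I, 0 < u ξ) ∧
    (∀ ξ ∈ I, ((n : ℝ) - 2) * deriv (deriv φ) ξ / φ ξ
      - (1 / u ξ) * (deriv (deriv u) ξ + 2 * (deriv φ ξ / φ ξ) * deriv u ξ) = 0) ∧
    (∀ ξ ∈ I, deriv (deriv φ) ξ / φ ξ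
      - ((n : ℝ) - 1) * (deriv φ ξ) ^ 2 / (φ ξ) ^ 2
      + (deriv φ ξ / φ ξ) * (deriv u ξ / u ξ) = 0) := by
  obtain ⟨m, rfl⟩ : ∃ m, n = m + 3 := ⟨n - 3, by omega⟩
  have hu' : u = fun ξ => C * (φ ξ) ^ (m + 2) / deriv φ ξ := hu
  clear hu
  subst hu'
  -- smoothness facts
  have h1 : ContDiffOn ℝ ((⊤:ℕ∞):WithTop ℕ∞) φ I := hφ.of_le (by simp)
  have h2 : ContDiffOn ℝ ((⊤:ℕ∞):WithTop ℕ∞) (deriv φ) I :=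
    h1.deriv_of_isOpen hI (by exact_mod_cast le_top)
  have hφd : ∀ ξ ∈ I, HasDerivAt φ (deriv φ ξ) ξ := fun ξ hξ =>
    ((h1.contDiffAt (hI.mem_nhds hξ)).differentiableAt (by simp)).hasDerivAt
  have hφdd : ∀ ξ ∈ I, HasDerivAt (deriv φ) (deriv (deriv φ) ξ) ξ := fun ξ hξ =>
    ((h2.contDiffAt (hI.mem_nhds hξ)).differentiableAt (by simp)).hasDerivAt
  -- rewrite ode exponents
  have hode' : ∀ ξ ∈ I, (deriv φ ξ) ^ 2
      = C₂ ^ 2 * (φ ξ) ^ (m+3) * Real.exp (-C₁ * ((φ ξ) ^ (2*m+4))⁻¹) := by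
    intro ξ hξ
    have := hode ξ hξ
    rw [show 2 * (m + 3 - 1) = 2*m+4 by omega] at this
    rwa [neg_div, div_eq_mul_inv, ← neg_mul] at this
  -- second derivative of φ
  have hq : ∀ ξ ∈ I, deriv (deriv φ) ξ
      = (deriv φ ξ)^2 * (((m:ℝ)+3) * (φ ξ)^(2*m+4) + C₁*(2*(m:ℝ)+4)) / (2 * (φ ξ)^(2*m+5)) := by
    intro ξ hξ
    have hp : (0:ℝ) < φ ξ := hφ0 ξ hξ
    have hd : (0:ℝ) < deriv φ ξ := hφ' ξ hξ
    have hp0 : φ ξ ≠ 0 := hp.ne'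
    have hd0 : deriv φ ξ ≠ 0 := hd.ne'
    have hpow : HasDerivAt (fun x => (φ x) ^ (2*m+4))
        ((2*m+4 : ℕ) * (φ ξ) ^ (2*m+4-1) * deriv φ ξ) ξ := (hφd ξ hξ).pow _
    have hexp := ((hpow.inv (pow_ne_zero _ hp0)).const_mul (-C₁)).exp
    have hlhs : HasDerivAt (fun x => (deriv φ x)^2)
        (2 * (deriv φ ξ) ^ (2-1) * deriv (deriv φ) ξ) ξ := (hφdd ξ hξ).pow 2
    have hmul := (((hφd ξ hξ).pow (m+3)).const_mul (C₂^2)).mul hexp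
    have heq : (fun x => (deriv φ x)^2) =ᶠ[nhds ξ]
        (fun x => C₂ ^ 2 * (φ x) ^ (m+3) * Real.exp (-C₁ * ((φ x) ^ (2*m+4))⁻¹)) :=
      Filter.eventuallyEq_of_mem (hI.mem_nhds hξ) (fun x hx => hode' x hx)
    have huniq := hmul.unique (hlhs.congr_of_eventuallyEq heq.symm)
    simp only [Pi.inv_apply, Pi.pow_apply, show m+3-1 = m+2 by omega, show 2*m+4-1 = 2*m+3 by omega,
      Nat.cast_add, Nat.cast_mul, Nat.cast_ofNat] at huniq
    have hE := hode' ξ hξ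
    set E := Real.exp (-C₁ * ((φ ξ) ^ (2*m+4))⁻¹) with hEdef
    set p := φ ξ
    set d := deriv φ ξ
    set q := deriv (deriv φ) ξ
    have hEval : E = d^2 / (C₂ ^ 2 * p ^ (m+3)) := by
      rw [hE]; field_simp
    rw [hEval] at huniq
    field_simp at huniq
    have key : (q * (2 * p^(2*m+5))) * (C₂^4 * d * p^(4*m+9))
        = (d^2 * (((m:ℝ)+3) * p^(2*m+4) + C₁*(2*(m:ℝ)+4))) * (C₂^4 * d * p^(4*m+9)) := by
      linear_combination (-(C₂^4 * p^(m+3)):ℝ) * huniq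
    have key2 := mul_right_cancel₀
      (mul_ne_zero (mul_ne_zero (pow_ne_zero 4 hC₂) hd0) (pow_ne_zero _ hp0)) key
    rw [eq_div_iff (by positivity)]
    exact key2
  -- first derivative of u is an explicit function of φ
  have hudI : ∀ ξ ∈ I, HasDerivAt (fun x => C * (φ x) ^ (m + 2) / deriv φ x)
      (C * (((m:ℝ)+1) * (φ ξ)^(m+1) / 2 - C₁*((m:ℝ)+2) / (φ ξ)^(m+3))) ξ := by
    intro ξ hξ
    have hp : (0:ℝ) < φ ξ := hφ0 ξ hξ
    have hd : (0:ℝ) < deriv φ ξ := hφ' ξ hξ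
    have hp0 : φ ξ ≠ 0 := hp.ne'
    have hd0 : deriv φ ξ ≠ 0 := hd.ne'
    have h0 := (((hφd ξ hξ).pow (m+2)).const_mul C).div (hφdd ξ hξ) hd0
    refine h0.congr_deriv ?_
    simp only [Pi.pow_apply, show m+2-1 = m+1 by omega, Nat.cast_add, Nat.cast_ofNat]
    rw [hq ξ hξ]
    set p := φ ξ
    set d := deriv φ ξ
    field_simp
    ring
  refine ⟨?_, ?_, ?_⟩
  · intro ξ hξ
    exact div_pos (mul_pos hC (pow_pos (hφ0 ξ hξ) _)) (hφ' ξ hξ)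
  · intro ξ hξ
    have hp : (0:ℝ) < φ ξ := hφ0 ξ hξ
    have hd : (0:ℝ) < deriv φ ξ := hφ' ξ hξ
    have hp0 : φ ξ ≠ 0 := hp.ne'
    have hd0 : deriv φ ξ ≠ 0 := hd.ne'
    have hDu : deriv (fun x => C * (φ x) ^ (m + 2) / deriv φ x) ξ
        = C * (((m:ℝ)+1) * (φ ξ)^(m+1) / 2 - C₁*((m:ℝ)+2) / (φ ξ)^(m+3)) := (hudI ξ hξ).deriv
    have hev : deriv (fun x => C * (φ x) ^ (m + 2) / deriv φ x) =ᶠ[nhds ξ]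
        (fun x => C * (((m:ℝ)+1) * (φ x)^(m+1) / 2 - C₁*((m:ℝ)+2) / (φ x)^(m+3))) :=
      Filter.eventuallyEq_of_mem (hI.mem_nhds hξ) (fun x hx => (hudI x hx).deriv)
    have hA := (((hφd ξ hξ).pow (m+1)).const_mul ((m:ℝ)+1)).div_const 2
    have hB := (hasDerivAt_const ξ (C₁*((m:ℝ)+2))).div ((hφd ξ hξ).pow (m+3))
      (pow_ne_zero _ hp0)
    have hW := (hA.sub hB).const_mul C
    have hDDu : deriv (deriv (fun x => C * (φ x) ^ (m + 2) / deriv φ x)) ξ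
        = C * ((((m:ℝ)+1) * ((↑(m+1) : ℝ) * (φ ξ)^m * deriv φ ξ) / 2)
          - ((0 * (φ ξ)^(m+3) - C₁*((m:ℝ)+2) * ((↑(m+3):ℝ) * (φ ξ)^(m+2) * deriv φ ξ))
              / ((φ ξ)^(m+3))^2)) := by
      rw [hev.deriv_eq]
      exact hW.deriv
    rw [hDDu, hDu, hq ξ hξ]
    set p := φ ξ
    set d := deriv φ ξ
    have hu0 : C * p ^ (m+2) / d ≠ 0 := ne_of_gt (div_pos (mul_pos hC (pow_pos hp _)) hd)
    show ((↑(m+3):ℝ) - 2) * (d^2 * (((m:ℝ)+3) * p^(2*m+4) + C₁*(2*(m:ℝ)+4)) / (2 * p^(2*m+5))) / p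
      - (1 / (C * p ^ (m+2) / d)) * (_ + 2 * (d / p) * _) = 0
    push_cast
    field_simp
    ring
  · intro ξ hξ
    have hp : (0:ℝ) < φ ξ := hφ0 ξ hξ
    have hd : (0:ℝ) < deriv φ ξ := hφ' ξ hξ
    have hp0 : φ ξ ≠ 0 := hp.ne'
    have hd0 : deriv φ ξ ≠ 0 := hd.ne'
    have hDu : deriv (fun x => C * (φ x) ^ (m + 2) / deriv φ x) ξ
        = C * (((m:ℝ)+1) * (φ ξ)^(m+1) / 2 - C₁*((m:ℝ)+2) / (φ ξ)^(m+3)) := (hudI ξ hξ).deriv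
    rw [hDu, hq ξ hξ]
    beta_reduce
    set p := φ ξ
    set d := deriv φ ξ
    push_cast
    field_simp
    ring
end
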